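/- If E ∈ ℂ has nonzero imaginary part, then T(E) has no eigenvalue on the unit circle: for every θ ∈ ℝ, det(T(E) − e^{iθ}·I_{2m}) ≠ 0. -/
import Mathlib


open Matrix

noncomputable def tstep {m : ℕ} (A B C : Matrix (Fin m) (Fin m) ℂ) (E : ℂ) :
    Matrix (Fin m ⊕ Fin m) (Fin m ⊕ Fin m) ℂ :=
  Matrix.fromBlocks (B⁻¹ * (E • 1 - A)) (-(B⁻¹ * C)) 1 0

/-- The transfer matrix `T(E) = t_n(E) ⋯ t_1(E)` (0-indexed: `t_{n-1} ⋯ t_0`). -/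
noncomputable def transfer {n m : ℕ} (A B C : Fin n → Matrix (Fin m) (Fin m) ℂ) (E : ℂ) :
    Matrix (Fin m ⊕ Fin m) (Fin m ⊕ Fin m) ℂ :=
  ((List.ofFn fun k : Fin n => tstep (A k) (B k) (C k) E).reverse).prod

/-- For the Hermitian chain: `C_k = B_{k-1}ᴴ` for `k = 2,…,n` and `C_1 = B_nᴴ`
(indices cyclically shifted, `0`-indexed). -/
noncomputable def hermC {n m : ℕ} (hn : 0 < n) (B : Fin n → Matrix (Fin m) (Fin m) ℂ) :
    Fin n → Matrix (Fin m) (Fin m) ℂ :=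
  fun k => (B ⟨((k : ℕ) + (n - 1)) % n, Nat.mod_lt _ hn⟩)ᴴ

/-- The symplectic form `Σ_n = i·[[0, -B_nᴴ],[B_n, 0]]`. -/
noncomputable def SigmaN {n m : ℕ} (hn : 0 < n) (B : Fin n → Matrix (Fin m) (Fin m) ℂ) :
    Matrix (Fin m ⊕ Fin m) (Fin m ⊕ Fin m) ℂ :=
  Complex.I • Matrix.fromBlocks 0 (-(B ⟨n - 1, by omega⟩)ᴴ) (B ⟨n - 1, by omega⟩) 0

def Tpre {α : Type*} [Monoid α] (f : ℕ → α) : ℕ → α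
  | 0 => 1
  | k+1 => f k * Tpre f k

lemma listProd_eq {α : Type*} [Monoid α] (f : ℕ → α) (k : ℕ) :
    ((List.ofFn fun j : Fin k => f j).reverse).prod = Tpre f k := by
  induction k with
  | zero => simp [Tpre]
  | succ k ih =>
    rw [List.ofFn_succ', List.concat_eq_append, List.reverse_append]
    simp only [List.reverse_singleton, List.singleton_append, List.prod_cons, Tpre]
    simp only [Fin.coe_castSucc] at *
    rw [ih]
    simp [Fin.val_last]

lemma step_key {m : ℕ} (A B C : Matrix (Fin m) (Fin m) ℂ) (hA : A.IsHermitian)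
    (hB : IsUnit B) (E : ℂ) :
    (tstep A B C E)ᴴ * (Complex.I • fromBlocks 0 (-Bᴴ) B 0) * tstep A B C E
      = Complex.I • fromBlocks 0 (-C) Cᴴ 0
        + (Complex.I * (E - (starRingEnd ℂ) E)) • fromBlocks 1 0 0 0 := by
  have hBd : IsUnit B.det := (Matrix.isUnit_iff_isUnit_det B).mp hB
  have h1 : B * B⁻¹ = 1 := Matrix.mul_nonsing_inv B hBd
  have hBP : B * (B⁻¹ * (E • 1 - A)) = E • 1 - A := by
    rw [← mul_assoc, h1, one_mul]
  have hBQ : B * (-(B⁻¹ * C)) = -C := by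
    rw [mul_neg, ← mul_assoc, h1, one_mul]
  have hPB : (B⁻¹ * (E • 1 - A))ᴴ * Bᴴ = (starRingEnd ℂ E) • 1 - A := by
    rw [← Matrix.conjTranspose_mul, hBP]
    simp [Matrix.conjTranspose_smul, hA.eq, Matrix.conjTranspose_sub]
  have hQB : (-(B⁻¹ * C))ᴴ * Bᴴ = -Cᴴ := by
    rw [← Matrix.conjTranspose_mul, hBQ, Matrix.conjTranspose_neg]
  rw [tstep, Matrix.mul_smul, Matrix.smul_mul, Matrix.fromBlocks_conjTranspose]
  rw [Matrix.fromBlocks_multiply, Matrix.fromBlocks_multiply]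
  simp only [Matrix.mul_zero, Matrix.zero_mul, Matrix.mul_one, Matrix.one_mul,
    Matrix.mul_neg, Matrix.neg_mul, add_zero, zero_add, Matrix.conjTranspose_one,
    Matrix.conjTranspose_zero]
  have hBC : B * (B⁻¹ * C) = C := by rw [← mul_assoc, h1, one_mul]
  rw [hBP, hPB, hQB, hBC]
  have hX : E • (1 : Matrix (Fin m) (Fin m) ℂ) - A + -((starRingEnd ℂ) E • 1 - A)
      = (E - (starRingEnd ℂ) E) • 1 := by
    rw [sub_smul]; abel
  rw [hX, neg_neg, neg_zero]
  have h2 : fromBlocks ((E - (starRingEnd ℂ) E) • (1 : Matrix (Fin m) (Fin m) ℂ)) (-C) Cᴴ 0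
      = fromBlocks 0 (-C) Cᴴ (0 : Matrix (Fin m) (Fin m) ℂ)
        + (E - (starRingEnd ℂ) E) • fromBlocks 1 0 0 0 := by
    simp [Matrix.fromBlocks_smul, Matrix.fromBlocks_add]
  rw [h2, smul_add, smul_smul]

noncomputable def Sform {n m : ℕ} (hn : 0 < n) (B : Fin n → Matrix (Fin m) (Fin m) ℂ) :
    ℕ → Matrix (Fin m ⊕ Fin m) (Fin m ⊕ Fin m) ℂ :=
  fun k => Complex.I • fromBlocks 0 (-(B ⟨(k + (n - 1)) % n, Nat.mod_lt _ hn⟩)ᴴ)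
    (B ⟨(k + (n - 1)) % n, Nat.mod_lt _ hn⟩) 0

noncomputable def Fstep {n m : ℕ} (hn : 0 < n) (A B : Fin n → Matrix (Fin m) (Fin m) ℂ)
    (E : ℂ) : ℕ → Matrix (Fin m ⊕ Fin m) (Fin m ⊕ Fin m) ℂ :=
  fun k => if h : k < n then tstep (A ⟨k, h⟩) (B ⟨k, h⟩) (hermC hn B ⟨k, h⟩) E else 1

lemma Sform_step {n m : ℕ} (hn : 0 < n) (A B : Fin n → Matrix (Fin m) (Fin m) ℂ)
    (hA : ∀ k, (A k).IsHermitian) (hB : ∀ k, IsUnit (B k)) (E : ℂ) {k : ℕ} (hk : k < n) :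
    (Fstep hn A B E k)ᴴ * Sform hn B (k + 1) * Fstep hn A B E k
      = Sform hn B k
        + (Complex.I * (E - (starRingEnd ℂ) E)) • fromBlocks 1 0 0 0 := by
  have hidx : (⟨(k + 1 + (n - 1)) % n, Nat.mod_lt _ hn⟩ : Fin n) = ⟨k, hk⟩ := by
    apply Fin.ext
    simp only
    have h1 : k + 1 + (n - 1) = k + n := by omega
    rw [h1, Nat.add_mod_right, Nat.mod_eq_of_lt hk]
  rw [Fstep, dif_pos hk, Sform, hidx]
  have := step_key (A ⟨k, hk⟩) (B ⟨k, hk⟩) (hermC hn B ⟨k, hk⟩) (hA _) (hB _) E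
  rw [this]
  congr 1
  rw [Sform, hermC]
  simp only [Matrix.conjTranspose_conjTranspose]

lemma qP {m : ℕ} (w : (Fin m ⊕ Fin m) → ℂ) :
    star w ⬝ᵥ ((fromBlocks 1 0 0 0 : Matrix (Fin m ⊕ Fin m) (Fin m ⊕ Fin m) ℂ) *ᵥ w)
      = ((∑ i, Complex.normSq (w (Sum.inl i)) : ℝ) : ℂ) := by
  push_cast
  simp only [dotProduct, Matrix.mulVec, Fintype.sum_sum_type, Pi.star_apply]
  simp [dotProduct, Fintype.sum_sum_type, Matrix.one_apply,
    Finset.sum_ite_eq, Complex.normSq_eq_conj_mul_self, mul_comm]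

/-- If `E` has nonzero imaginary part, `T(E)` has no eigenvalue on the unit
circle. -/
theorem stmt18 {n m : ℕ} (hn : 2 ≤ n) (hm : 1 ≤ m)
    (A B : Fin n → Matrix (Fin m) (Fin m) ℂ)
    (hA : ∀ k, (A k).IsHermitian) (hB : ∀ k, IsUnit (B k)) (E : ℂ) (hE : E.im ≠ 0) :
    ∀ θ : ℝ, (transfer A B (hermC (by omega : 0 < n) B) E -
      Complex.exp (θ * Complex.I) • 1).det ≠ 0 := by
  intro θ hdet
  have hn0 : 0 < n := by omega
  set lam : ℂ := Complex.exp (θ * Complex.I) with hlamdef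
  obtain ⟨v, hv0, hv⟩ := (Matrix.exists_mulVec_eq_zero_iff).mpr hdet
  set F := Fstep hn0 A B E with hFdef
  have hT : transfer A B (hermC hn0 B) E = Tpre F n := by
    have hfun : (fun k : Fin n => tstep (A k) (B k) (hermC hn0 B k) E)
        = fun j : Fin n => F (j : ℕ) := by
      funext k
      rw [hFdef, Fstep, dif_pos k.isLt]
    rw [transfer, hfun, listProd_eq]
  have hTv : Tpre F n *ᵥ v = lam • v := by
    rw [Matrix.sub_mulVec, sub_eq_zero] at hv
    rw [← hT, hv, Matrix.smul_mulVec, Matrix.one_mulVec]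
  set w : ℕ → (Fin m ⊕ Fin m) → ℂ := fun k => Tpre F k *ᵥ v with hwdef
  set r : ℕ → ℝ := fun k => ∑ i, Complex.normSq (w k (Sum.inl i)) with hrdef
  set c : ℂ := Complex.I * (E - (starRingEnd ℂ) E) with hcdef
  have key : ∀ k, k ≤ n → star (w k) ⬝ᵥ (Sform hn0 B k *ᵥ w k)
      = star v ⬝ᵥ (Sform hn0 B 0 *ᵥ v) + c * ∑ j ∈ Finset.range k, ((r j : ℝ) : ℂ) := by
    intro k
    induction k with
    | zero =>
      intro _
      simp [hwdef, Tpre, Matrix.one_mulVec]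
    | succ k ih =>
      intro hk1
      have hk : k < n := by omega
      have hwk : w (k + 1) = F k *ᵥ w k := by
        rw [hwdef]
        simp only [Tpre, ← Matrix.mulVec_mulVec]
      rw [hwk, Matrix.star_mulVec, ← Matrix.dotProduct_mulVec,
        Matrix.mulVec_mulVec, Matrix.mulVec_mulVec, hFdef,
        Sform_step hn0 A B hA hB E hk, Matrix.add_mulVec,
        dotProduct_add, Matrix.smul_mulVec, dotProduct_smul,
        smul_eq_mul, qP, ih (by omega), Finset.sum_range_succ]
      ring
  have hSn : Sform hn0 B n = Sform hn0 B 0 := by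
    rw [Sform, Sform]
    have hidx : (⟨(n + (n - 1)) % n, Nat.mod_lt _ hn0⟩ : Fin n)
        = ⟨(0 + (n - 1)) % n, Nat.mod_lt _ hn0⟩ :=
      Fin.ext (by simp only []; rw [Nat.add_mod_left, zero_add])
    rw [hidx]
  have hlam1 : (starRingEnd ℂ) lam * lam = 1 := by
    rw [hlamdef, ← Complex.exp_conj, ← Complex.exp_add]
    have h0 : (starRingEnd ℂ) (↑θ * Complex.I) + ↑θ * Complex.I = 0 := by
      rw [_root_.map_mul, Complex.conj_ofReal, Complex.conj_I]
      ring
    rw [h0, Complex.exp_zero]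
  have hfin := key n le_rfl
  have hwn : w n = lam • v := by rw [hwdef]; exact hTv
  rw [hwn, hSn] at hfin
  have hlhs : star (lam • v) ⬝ᵥ (Sform hn0 B 0 *ᵥ (lam • v))
      = star v ⬝ᵥ (Sform hn0 B 0 *ᵥ v) := by
    rw [star_smul, Matrix.mulVec_smul, smul_dotProduct, dotProduct_smul]
    rw [smul_eq_mul, smul_eq_mul, ← mul_assoc]
    simp [hlam1]
  rw [hlhs, left_eq_add, mul_eq_zero] at hfin
  have hcval : c = ((-(2 * E.im) : ℝ) : ℂ) := by
    rw [hcdef, Complex.sub_conj]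
    rw [mul_comm Complex.I, mul_assoc, Complex.I_mul_I, mul_neg_one]
    push_cast
    ring
  have hc0 : c ≠ 0 := by
    rw [hcval]
    simp only [ne_eq, Complex.ofReal_eq_zero, neg_eq_zero]
    intro h
    apply hE
    linarith
  have hsum : ∑ j ∈ Finset.range n, ((r j : ℝ) : ℂ) = 0 := hfin.resolve_left hc0
  have hsumR : ∑ j ∈ Finset.range n, r j = 0 := by
    have := hsum
    push_cast at this
    exact_mod_cast this
  have hr : ∀ j ∈ Finset.range n, r j = 0 := by
    rw [← Finset.sum_eq_zero_iff_of_nonneg]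
    · exact hsumR
    · intro j _
      exact Finset.sum_nonneg fun i _ => Complex.normSq_nonneg _
  have hrz : ∀ j, j < n → ∀ i, w j (Sum.inl i) = 0 := by
    intro j hj i
    have h1 := hr j (Finset.mem_range.mpr hj)
    rw [hrdef] at h1
    have := (Finset.sum_eq_zero_iff_of_nonneg
      (fun i _ => Complex.normSq_nonneg (w j (Sum.inl i)))).mp h1 i (Finset.mem_univ i)
    exact Complex.normSq_eq_zero.mp this
  have hw0 : w 0 = v := by rw [hwdef]; exact Matrix.one_mulVec v
  have hvinl : ∀ i, v (Sum.inl i) = 0 := by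
    intro i
    have := hrz 0 (by omega) i
    rwa [hw0] at this
  set x : Fin m → ℂ := fun i => v (Sum.inl i) with hxdef
  set y : Fin m → ℂ := fun i => v (Sum.inr i) with hydef
  have hx0 : x = 0 := funext hvinl
  have hvelim : v = Sum.elim x y := by funext z; cases z <;> rfl
  set B0 := B ⟨0, hn0⟩ with hB0def
  set C0 := hermC hn0 B ⟨0, hn0⟩ with hC0def
  have hw1 : w 1 = (tstep (A ⟨0, hn0⟩) B0 C0 E) *ᵥ v := by
    have h1 : Tpre F 1 = F 0 := by
      rw [show Tpre F 1 = F 0 * Tpre F 0 from rfl, show Tpre F 0 = (1 : Matrix (Fin m ⊕ Fin m) (Fin m ⊕ Fin m) ℂ) from rfl, mul_one]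
    show Tpre F 1 *ᵥ v = _
    rw [h1, hFdef, Fstep, dif_pos hn0]
  have hw1top : ∀ i, w 1 (Sum.inl i) = 0 := hrz 1 (by omega)
  have hmulv : (-(B0⁻¹ * C0)) *ᵥ y = 0 := by
    funext i
    have := hw1top i
    rw [hw1, hvelim, tstep, Matrix.fromBlocks_mulVec] at this
    simpa [hx0] using this
  have hBCy : (B0⁻¹ * C0) *ᵥ y = 0 := by
    rw [Matrix.neg_mulVec, neg_eq_zero] at hmulv
    exact hmulv
  have hB0d : IsUnit B0.det := (Matrix.isUnit_iff_isUnit_det _).mp (hB _)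
  have hCy : C0 *ᵥ y = 0 := by
    have h1 : B0 *ᵥ ((B0⁻¹ * C0) *ᵥ y) = 0 := by rw [hBCy, Matrix.mulVec_zero]
    rw [Matrix.mulVec_mulVec, ← mul_assoc, Matrix.mul_nonsing_inv B0 hB0d, one_mul] at h1
    exact h1
  have hC0unit : IsUnit C0 := by
    rw [hC0def, hermC, ← Matrix.star_eq_conjTranspose]
    exact (hB _).star
  have hy0 : y = 0 := by
    have hC0d : IsUnit C0.det := (Matrix.isUnit_iff_isUnit_det _).mp hC0unit
    have h1 : C0⁻¹ *ᵥ (C0 *ᵥ y) = y := by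
      rw [Matrix.mulVec_mulVec, Matrix.nonsing_inv_mul C0 hC0d, Matrix.one_mulVec]
    rw [hCy, Matrix.mulVec_zero] at h1
    exact h1.symm
  apply hv0
  funext z
  cases z with
  | inl i => exact hvinl i
  | inr i => exact congrFun hy0 i
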